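/- Let G be the presented group ⟨a, b, c | r₁, r₂, r₃⟩ where r₁ = a·c·b⁻¹·a⁻¹·c⁻¹·a·c·b·c⁻¹, r₂ = a·a·b⁻¹·c·b·a·b·c⁻¹, r₃ = a·b·a⁻¹·b⁻¹·c·c. Then there exists a surjective group homomorphism from G onto the dihedral group of order 6. -/

import Mathlib

/-!
Send `a ↦ 1`, `b ↦ r` (a rotation of order 3) and `c ↦ s` (a reflection). Then `r₁` becomes
`s r⁻¹ s⁻¹ s r s⁻¹ = 1`, `r₃` becomes `s² = 1`, and `r₂` becomes `r⁻¹ s r² s⁻¹`, which is trivial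
because `s r² s⁻¹ = r⁻² = r`. The map is onto since `r` and `s` generate the dihedral group.
-/

theorem PresentedGroup.toGroup_surjective_of_closure_range_eq_top {α G : Type*} [Group G]
    {f : α → G} {rels : Set (FreeGroup α)} (h : ∀ r ∈ rels, FreeGroup.lift f r = 1)
    (hf : Subgroup.closure (Set.range f) = ⊤) : Function.Surjective (PresentedGroup.toGroup h) :=
  Function.Surjective.of_comp (g := PresentedGroup.mk rels)
    (FreeGroup.lift_surjective_iff_closure_range_eq_top.mpr hf)

namespace DihedralGroup

theorem closure_r_one_sr_zero (n : ℕ) :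
    Subgroup.closure {r 1, sr 0} = (⊤ : Subgroup (DihedralGroup n)) := by
  have hr : ∀ i : ZMod n, r i ∈ Subgroup.closure {r (1 : ZMod n), sr 0} := by
    intro i
    obtain ⟨k, rfl⟩ := ZMod.intCast_surjective i
    rw [← r_one_zpow]
    exact Subgroup.zpow_mem _ (Subgroup.subset_closure (by simp)) k
  refine eq_top_iff.mpr fun x _ => ?_
  rcases x with i | i
  · exact hr i
  · rw [← zero_add i, ← sr_mul_r]
    exact Subgroup.mul_mem _ (Subgroup.subset_closure (by simp)) (hr i)

end DihedralGroup

namespace Stmt1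

/-- The generator `a` of the free group on three generators. -/
def a : FreeGroup (Fin 3) := FreeGroup.of 0
/-- The generator `b` of the free group on three generators. -/
def b : FreeGroup (Fin 3) := FreeGroup.of 1
/-- The generator `c` of the free group on three generators. -/
def c : FreeGroup (Fin 3) := FreeGroup.of 2

/-- The relator `r₁ = a·c·b⁻¹·a⁻¹·c⁻¹·a·c·b·c⁻¹`. -/
def r₁ : FreeGroup (Fin 3) := a * c * b⁻¹ * a⁻¹ * c⁻¹ * a * c * b * c⁻¹
/-- The relator `r₂ = a·a·b⁻¹·c·b·a·b·c⁻¹`. -/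
def r₂ : FreeGroup (Fin 3) := a * a * b⁻¹ * c * b * a * b * c⁻¹
/-- The relator `r₃ = a·b·a⁻¹·b⁻¹·c·c`. -/
def r₃ : FreeGroup (Fin 3) := a * b * a⁻¹ * b⁻¹ * c * c

def dihedralImage : Fin 3 → DihedralGroup 3 := ![1, .r 1, .sr 0]

theorem lift_dihedralImage_relator :
    ∀ r ∈ ({r₁, r₂, r₃} : Set (FreeGroup (Fin 3))), FreeGroup.lift dihedralImage r = 1 := by
  rintro r (rfl | rfl | rfl) <;>
    simp only [r₁, r₂, r₃, a, b, c, map_mul, map_inv, FreeGroup.lift_apply_of] <;> decide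

theorem closure_range_dihedralImage : Subgroup.closure (Set.range dihedralImage) = ⊤ := by
  refine eq_top_iff.mpr ((DihedralGroup.closure_r_one_sr_zero 3).ge.trans (Subgroup.closure_mono ?_))
  rintro x (rfl | rfl)
  exacts [⟨1, rfl⟩, ⟨2, rfl⟩]

/-- The presented group `⟨a, b, c | r₁, r₂, r₃⟩` surjects onto the dihedral
group of order 6. -/
theorem exists_surjective_hom_to_dihedral :
    ∃ f : PresentedGroup ({r₁, r₂, r₃} : Set (FreeGroup (Fin 3))) →* DihedralGroup 3,
      Function.Surjective f :=
  ⟨PresentedGroup.toGroup lift_dihedralImage_relator,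
    PresentedGroup.toGroup_surjective_of_closure_range_eq_top _ closure_range_dihedralImage⟩

end Stmt1
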